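/- arXiv:2603.03817 — 5 statements merged into one kernel-verified Lean document; each statement's English description precedes it below -/
import Mathlib

section
/- Let c ∈ ℝ^m and let V be the rational envelope of c (the minimal ℚ-affine subspace of ℝ^m containing c). Then V ∩ ℚ^m is dense in V. -/
/-- The set of vectors in `ℝ^m` with all coordinates rational, as a `ℚ`-submodule. -/
def ratSubmodule (m : ℕ) : Submodule ℚ (Fin m → ℝ) where
  carrier := {x | ∀ i, ∃ q : ℚ, x i = (q : ℝ)}
  zero_mem' := fun i => ⟨0, by simp⟩
  add_mem' := by
    rintro a b ha hb i
    obtain ⟨qa, hqa⟩ := ha i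
    obtain ⟨qb, hqb⟩ := hb i
    exact ⟨qa + qb, by simp [hqa, hqb]⟩
  smul_mem' := by
    rintro q a ha i
    obtain ⟨qa, hqa⟩ := ha i
    exact ⟨q * qa, by simp [Pi.smul_apply, hqa, Rat.smul_def]⟩

/-- The real span of a set is contained in the closure of its rational span. -/
lemma span_real_subset_closure_span_rat {m : ℕ} (T : Set (Fin m → ℝ)) :
    (Submodule.span ℝ T : Set (Fin m → ℝ)) ⊆
      closure (Submodule.span ℚ T : Set (Fin m → ℝ)) := by
  have key : ∀ (r : ℝ), ∀ x ∈ closure (Submodule.span ℚ T : Set (Fin m → ℝ)),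
      r • x ∈ closure (Submodule.span ℚ T : Set (Fin m → ℝ)) := by
    intro r x hx
    have step1 : ∀ y ∈ (Submodule.span ℚ T : Set (Fin m → ℝ)),
        r • y ∈ closure (Submodule.span ℚ T : Set (Fin m → ℝ)) := by
      intro y hy
      have hcont : Continuous (fun t : ℝ => t • y) := continuous_id.smul continuous_const
      have hr : r ∈ closure (Set.range ((↑) : ℚ → ℝ)) := by
        rw [Rat.denseRange_cast.closure_range]; trivial
      refine map_mem_closure (f := fun t : ℝ => t • y) hcont hr ?_
      rintro _ ⟨q, rfl⟩
      have hq : (q : ℝ) • y = q • y := by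
        simpa using ratCast_smul_eq ℝ ℚ q y
      show (q : ℝ) • y ∈ (Submodule.span ℚ T : Set (Fin m → ℝ))
      rw [hq]
      exact Submodule.smul_mem _ q hy
    have hcont : Continuous (fun z : Fin m → ℝ => r • z) := continuous_id.const_smul r
    have := map_mem_closure hcont hx step1
    rwa [closure_closure] at this
  let M : Submodule ℝ (Fin m → ℝ) :=
    { carrier := closure (Submodule.span ℚ T : Set (Fin m → ℝ))
      zero_mem' := subset_closure (Submodule.zero_mem _)
      add_mem' := fun hx hy =>
        map_mem_closure₂ continuous_add hx hy
          (fun a ha b hb => Submodule.add_mem _ ha hb)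
      smul_mem' := fun r x hx => key r x hx }
  have : Submodule.span ℝ T ≤ M :=
    Submodule.span_le.mpr (fun t ht => subset_closure (Submodule.subset_span ht))
  exact this

/-- If `V` is the rational envelope of `c ∈ ℝ^m`, then `V ∩ ℚ^m` is dense
in `V`. -/
theorem stmt_3 (m : ℕ) (c : Fin m → ℝ) (V : AffineSubspace ℝ (Fin m → ℝ))
    (hcV : c ∈ V)
    (hVspan : V = affineSpan ℝ {x : Fin m → ℝ | x ∈ V ∧ ∀ i, ∃ q : ℚ, x i = (q : ℝ)})
    (hmin : ∀ W : AffineSubspace ℝ (Fin m → ℝ), c ∈ W →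
      W = affineSpan ℝ {x : Fin m → ℝ | x ∈ W ∧ ∀ i, ∃ q : ℚ, x i = (q : ℝ)} → V ≤ W) :
    ∀ v ∈ V, v ∈ closure {x : Fin m → ℝ | x ∈ V ∧ ∀ i, ∃ q : ℚ, x i = (q : ℝ)} := by
  intro v hv
  set S : Set (Fin m → ℝ) := {x | x ∈ V ∧ ∀ i, ∃ q : ℚ, x i = (q : ℝ)} with hSdef
  have hSne : S.Nonempty := by
    by_contra h
    rw [Set.not_nonempty_iff_eq_empty] at h
    rw [hVspan, h] at hcV
    simp at hcV
    exact AffineSubspace.notMem_bot ℝ (Fin m → ℝ) c hcV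
  obtain ⟨p₀, hp₀⟩ := hSne
  set T : Set (Fin m → ℝ) := (fun x => x -ᵥ p₀) '' S with hTdef
  -- v - p₀ is in the real span of T
  have hdir : V.direction = Submodule.span ℝ T := by
    conv_lhs => rw [hVspan]
    rw [direction_affineSpan]
    exact vectorSpan_eq_span_vsub_set_right ℝ hp₀
  have hvT : v - p₀ ∈ Submodule.span ℝ T := by
    have : v -ᵥ p₀ ∈ V.direction := AffineSubspace.vsub_mem_direction hv hp₀.1
    rwa [hdir, vsub_eq_sub] at this
  -- translation of the rational span lands in S
  have hmaps : ∀ y ∈ (Submodule.span ℚ T : Set (Fin m → ℝ)), p₀ + y ∈ S := by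
    intro y hy
    constructor
    · -- p₀ + y ∈ V
      have hTdir : T ⊆ (V.direction.restrictScalars ℚ : Set (Fin m → ℝ)) := by
        rintro t ⟨s, hs, rfl⟩
        exact AffineSubspace.vsub_mem_direction hs.1 hp₀.1
      have hy' : y ∈ V.direction :=
        Submodule.span_le.mpr hTdir hy
      have := AffineSubspace.vadd_mem_of_mem_direction hy' hp₀.1
      simpa [add_comm] using this
    · -- rational coordinates
      have hTQ : T ⊆ (ratSubmodule m : Set (Fin m → ℝ)) := by
        rintro t ⟨s, hs, rfl⟩
        intro i
        obtain ⟨qs, hqs⟩ := hs.2 i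
        obtain ⟨qp, hqp⟩ := hp₀.2 i
        exact ⟨qs - qp, by simp [vsub_eq_sub, Pi.sub_apply, hqs, hqp]⟩
      have hyQ : y ∈ ratSubmodule m := Submodule.span_le.mpr hTQ hy
      intro i
      obtain ⟨qy, hqy⟩ := hyQ i
      obtain ⟨qp, hqp⟩ := hp₀.2 i
      exact ⟨qp + qy, by simp [Pi.add_apply, hqy, hqp]⟩
  -- conclude by continuity of translation
  have hclose : v - p₀ ∈ closure (Submodule.span ℚ T : Set (Fin m → ℝ)) :=
    span_real_subset_closure_span_rat T hvT
  have hcont : Continuous (fun z : Fin m → ℝ => p₀ + z) := continuous_const.add continuous_id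
  have := map_mem_closure hcont hclose hmaps
  simpa using this
end

section
/- Let c ∈ ℝ^m, let V be the rational envelope of c, let n = dim V + 1, and let V_0 ⊆ V be any open neighborhood of c in V (in the subspace topology). Then there exist affinely independent rational points v_1, …, v_n ∈ V_0 ∩ ℚ^m such that c lies in the interior, relative to V, of the convex hull of v_1, …, v_n; moreover there exist unique real numbers a_1, …, a_n > 0 with Σ a_i = 1 and Σ a_i v_i = c. -/
open Module Set Finset

set_option maxHeartbeats 1000000 in
/-- If `V` is the rational envelope of `c`, `n = dim V + 1`, and `V₀ ⊆ V` is
an open neighborhood of `c` in `V`, then there are affinely independent rational points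
`v₁, …, v_n ∈ V₀` with `c` in the interior, relative to `V`, of their convex hull, and
unique `a₁, …, a_n > 0` with `Σ aᵢ = 1` and `Σ aᵢ vᵢ = c`. -/
theorem stmt_4 (m : ℕ) (c : Fin m → ℝ) (V : AffineSubspace ℝ (Fin m → ℝ))
    (hcV : c ∈ V)
    (hVspan : V = affineSpan ℝ {x : Fin m → ℝ | x ∈ V ∧ ∀ i, ∃ q : ℚ, x i = (q : ℝ)})
    (hmin : ∀ W : AffineSubspace ℝ (Fin m → ℝ), c ∈ W →
      W = affineSpan ℝ {x : Fin m → ℝ | x ∈ W ∧ ∀ i, ∃ q : ℚ, x i = (q : ℝ)} → V ≤ W)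
    (n : ℕ) (hn : n = Module.finrank ℝ V.direction + 1)
    (V₀ : Set (Fin m → ℝ)) (hV₀V : V₀ ⊆ (V : Set (Fin m → ℝ)))
    (hV₀open : IsOpen ((Subtype.val : V → (Fin m → ℝ)) ⁻¹' V₀))
    (hcV₀ : c ∈ V₀) :
    ∃ v : Fin n → Fin m → ℝ,
      (∀ i, v i ∈ V₀) ∧
      (∀ i j, ∃ q : ℚ, v i j = (q : ℝ)) ∧
      AffineIndependent ℝ v ∧
      (⟨c, hcV⟩ : V) ∈ interior
        ((Subtype.val : V → (Fin m → ℝ)) ⁻¹' (convexHull ℝ (Set.range v))) ∧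
      (∃! a : Fin n → ℝ, (∀ i, 0 < a i) ∧ ∑ i, a i = 1 ∧ ∑ i, a i • v i = c) := by
  classical
  haveI : Nonempty V := ⟨⟨c, hcV⟩⟩
  haveI : FiniteDimensional ℝ V.direction := inferInstance
  have npos : 0 < n := by omega
  have hnR : (0:ℝ) < n := by exact_mod_cast npos
  -- Step 1: a rational affine basis of V
  obtain ⟨B, hBrat⟩ : ∃ B : AffineBasis (Fin n) ℝ V,
      ∀ i j, ∃ q : ℚ, ((B i : V) : Fin m → ℝ) j = (q : ℝ) := by
    set S' : Set V := {x : V | ∀ j, ∃ q : ℚ, (x : Fin m → ℝ) j = (q : ℝ)} with hS'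
    have hspan' : affineSpan ℝ S' = ⊤ := by
      rw [eq_top_iff]
      intro x _
      have hmap : (affineSpan ℝ S').map V.subtype =
          affineSpan ℝ {x : Fin m → ℝ | x ∈ V ∧ ∀ i, ∃ q : ℚ, x i = (q : ℝ)} := by
        rw [AffineSubspace.map_span]
        congr 1
        ext y
        constructor
        · rintro ⟨z, hz, rfl⟩; exact ⟨z.2, hz⟩
        · rintro ⟨hyV, hyq⟩; exact ⟨⟨y, hyV⟩, hyq, rfl⟩
      have hx : V.subtype x ∈ (affineSpan ℝ S').map V.subtype := by
        rw [hmap, ← hVspan]; exact x.2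
      obtain ⟨z, hz, hzx⟩ := hx
      rwa [← Subtype.val_injective hzx]
    obtain ⟨s, hsS, b, hb⟩ := AffineBasis.exists_affine_subbasis (k := ℝ) hspan'
    haveI hfin : s.Finite := b.finite_set
    haveI := hfin.fintype
    have hcard : Fintype.card s = n := by rw [b.card_eq_finrank_add_one, hn]
    let e : Fin n ≃ s := (Fintype.equivFinOfCardEq hcard).symm
    refine ⟨b.reindex e.symm, fun i j => ?_⟩
    rw [AffineBasis.reindex_apply, Equiv.symm_symm, hb]
    exact hsS (e i).2 j
  set c' : V := ⟨c, hcV⟩ with hc'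
  set w' : Fin n → V := ⇑B with hw'
  set w : Fin n → Fin m → ℝ := fun i => (w' i : Fin m → ℝ) with hw
  obtain ⟨W, hW⟩ : ∃ W : Fin n → Fin m → ℚ, ∀ i j, w i j = (W i j : ℝ) := by
    choose W hW using hBrat; exact ⟨W, hW⟩
  have hwV : ∀ i, w i ∈ V := fun i => (w' i).2
  have hunivne : (Finset.univ : Finset (Fin n)).Nonempty := ⟨⟨0, npos⟩, Finset.mem_univ _⟩
  -- centroid
  set g' : V := Finset.univ.centroid ℝ w' with hg'
  set g : Fin m → ℝ := (g' : Fin m → ℝ) with hg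
  have hcw : ∑ i, Finset.univ.centroidWeights ℝ i = 1 :=
    Finset.univ.sum_centroidWeights_eq_one_of_nonempty ℝ hunivne
  have hgw : g = (n : ℝ)⁻¹ • ∑ i, w i := by
    calc g = V.subtype (Finset.univ.affineCombination ℝ w' (Finset.univ.centroidWeights ℝ)) := by
          rw [hg, hg', Finset.centroid_def]; rfl
      _ = Finset.univ.affineCombination ℝ w (Finset.univ.centroidWeights ℝ) := by
          rw [Finset.map_affineCombination _ _ _ hcw V.subtype]; rfl
      _ = ∑ i, Finset.univ.centroidWeights ℝ i • w i :=
          Finset.affineCombination_eq_linear_combination _ _ _ hcw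
      _ = (n : ℝ)⁻¹ • ∑ i, w i := by
          simp [Finset.centroidWeights_apply, Finset.card_univ, Finset.smul_sum]
  -- barycentric expansion of arbitrary points of V
  have hexp : ∀ q : V, (q : Fin m → ℝ) = ∑ i, B.coord i q • w i := by
    intro q
    have h := B.affineCombination_coord_eq_self q
    have hsum : ∑ i, B.coord i q = 1 := B.sum_coord_apply_eq_one q
    calc (q : Fin m → ℝ)
        = V.subtype (Finset.univ.affineCombination ℝ w' fun i => B.coord i q) := by
          rw [hw', h]; rfl
      _ = Finset.univ.affineCombination ℝ w fun i => B.coord i q := by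
          rw [Finset.map_affineCombination _ _ _ hsum V.subtype]; rfl
      _ = ∑ i, B.coord i q • w i :=
          Finset.affineCombination_eq_linear_combination _ _ _ hsum
  -- coordinates of c'
  set t : Fin n → ℝ := fun i => B.coord i c' with ht
  have htsum : ∑ i, t i = 1 := B.sum_coord_apply_eq_one c'
  have htc : ∑ i, t i • w i = c := (hexp c').symm
  -- the open neighborhood
  set U : Set V := (Subtype.val : V → (Fin m → ℝ)) ⁻¹' V₀ with hU
  have hc'U : c' ∈ U := hcV₀
  obtain ⟨ρ, hρpos, hball⟩ : ∃ ρ > 0, Metric.ball c' ρ ⊆ U :=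
    Metric.isOpen_iff.mp hV₀open c' hc'U
  -- choose ε (a small positive rational scale)
  obtain ⟨M, hMnn, hMb⟩ : ∃ M : ℝ, 0 ≤ M ∧ ∀ i, ‖(w' i : V) -ᵥ g'‖ ≤ M :=
    ⟨∑ i, ‖(w' i : V) -ᵥ g'‖, Finset.sum_nonneg fun i _ => norm_nonneg _,
      fun i => Finset.single_le_sum (f := fun i => ‖(w' i : V) -ᵥ g'‖)
        (fun i _ => norm_nonneg _) (Finset.mem_univ i)⟩
  obtain ⟨ε, hε0, hεM⟩ : ∃ ε : ℚ, 0 < (ε : ℝ) ∧ (ε : ℝ) * (M + 1) < ρ / 2 := by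
    obtain ⟨ε, hε1, hε2⟩ := exists_rat_btwn (show (0:ℝ) < ρ / 2 / (M + 1) by positivity)
    refine ⟨ε, hε1, ?_⟩
    rw [lt_div_iff₀ (by positivity)] at hε2
    linarith
  -- coordinate functionals and their norms
  obtain ⟨K, hKnn, hKb⟩ : ∃ K : ℝ, 0 ≤ K ∧
      ∀ i (z : V.direction), |(B.coord i).linear z| ≤ K * ‖z‖ := by
    refine ⟨∑ i, ‖LinearMap.toContinuousLinearMap (B.coord i).linear‖,
      Finset.sum_nonneg fun i _ => ContinuousLinearMap.opNorm_nonneg _, fun i z => ?_⟩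
    have h1 := (LinearMap.toContinuousLinearMap (B.coord i).linear).le_opNorm z
    rw [Real.norm_eq_abs] at h1
    have h2 : ‖LinearMap.toContinuousLinearMap (B.coord i).linear‖ ≤
        ∑ i, ‖LinearMap.toContinuousLinearMap (B.coord i).linear‖ :=
      Finset.single_le_sum (f := fun i => ‖LinearMap.toContinuousLinearMap (B.coord i).linear‖)
        (fun i _ => ContinuousLinearMap.opNorm_nonneg _) (Finset.mem_univ i)
    have h0 : (LinearMap.toContinuousLinearMap (B.coord i).linear) z = (B.coord i).linear z := rfl
    rw [h0] at h1
    nlinarith [norm_nonneg z]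
  set δ : ℝ := min (ρ / 2) ((ε : ℝ) / (n * (K + 1))) with hδ
  have hδpos : 0 < δ := lt_min (by positivity) (by positivity)
  -- choose a rational point r near c
  obtain ⟨r, hrV, hrrat, hrc⟩ : ∃ r : Fin m → ℝ, r ∈ V ∧
      (∀ j, ∃ q : ℚ, r j = (q : ℝ)) ∧ dist c r < δ := by
    set i₀ : Fin n := ⟨0, npos⟩ with hi₀
    set G : (Fin n → ℝ) → (Fin m → ℝ) := fun s => w i₀ + ∑ i, s i • (w i - w i₀) with hG
    have hGcont : Continuous G := by
      apply continuous_const.add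
      exact continuous_finset_sum _ fun i _ => (continuous_apply i).smul continuous_const
    have hGt : G t = c := by
      rw [hG]
      simp only [smul_sub, Finset.sum_sub_distrib, ← Finset.sum_smul, htsum, htc, one_smul]
      abel
    obtain ⟨η, hηpos, hη⟩ := Metric.continuousAt_iff.mp hGcont.continuousAt δ hδpos
    choose s hs using fun i => exists_rat_near (t i) (half_pos hηpos)
    have hst : dist (fun i => (s i : ℝ)) t < η := by
      rw [dist_pi_lt_iff hηpos]
      intro i
      rw [Real.dist_eq, abs_sub_comm]
      exact lt_of_lt_of_le (hs i) (half_le_self hηpos.le)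
    refine ⟨G (fun i => (s i : ℝ)), ?_, ?_, ?_⟩
    · rw [hG]
      have hmem : (∑ i, (s i : ℝ) • (w i - w i₀)) ∈ V.direction := by
        apply Submodule.sum_mem
        intro i _
        apply Submodule.smul_mem
        have := AffineSubspace.vsub_mem_direction (hwV i) (hwV i₀)
        rwa [vsub_eq_sub] at this
      have h2 := AffineSubspace.vadd_mem_of_mem_direction hmem (hwV i₀)
      rwa [vadd_eq_add, add_comm] at h2
    · intro j
      refine ⟨W i₀ j + ∑ i, s i * (W i j - W i₀ j), ?_⟩
      rw [hG]
      simp only [Pi.add_apply, Finset.sum_apply, Pi.smul_apply, Pi.sub_apply, smul_eq_mul, hW]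
      push_cast
      ring
    · have := hη hst
      rw [hGt] at this
      rwa [dist_comm]
  set r' : V := ⟨r, hrV⟩ with hr'
  set d : V.direction := c' -ᵥ r' with hd
  have hdnorm : ‖d‖ < δ := by
    have hdn : ‖c' -ᵥ r'‖ = dist c' r' := (dist_eq_norm_vsub V.direction c' r').symm
    rw [hd, hdn]
    exact hrc
  -- the simplex vertices
  set v' : Fin n → V := fun i => ((ε : ℝ) • (w' i -ᵥ g')) +ᵥ r' with hv'
  set v : Fin n → Fin m → ℝ := fun i => (v' i : Fin m → ℝ) with hv
  have hvval : ∀ i, v i = (ε : ℝ) • (w i - g) + r := by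
    intro i
    have h := AffineSubspace.coe_vadd V ((ε : ℝ) • (w' i -ᵥ g')) r'
    have h2 : ((((ε : ℝ) • (w' i -ᵥ g') : V.direction)) : Fin m → ℝ)
        = (ε : ℝ) • (w i - g) := by
      have h3 := AffineSubspace.coe_vsub V (w' i) g'
      push_cast
      rw [vsub_eq_sub]
    rw [hv]
    show ((((ε : ℝ) • (w' i -ᵥ g')) +ᵥ r' : V) : Fin m → ℝ) = _
    rw [h, h2, vadd_eq_add]
  -- membership in V₀
  have hδρ : δ ≤ ρ / 2 := min_le_left _ _
  have hvmem : ∀ i, v i ∈ V₀ := by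
    intro i
    have hball' : v' i ∈ Metric.ball c' ρ := by
      rw [Metric.mem_ball]
      have hnormle : ‖w' i -ᵥ g'‖ ≤ M := hMb i
      have h1 : dist (v' i) r' = (ε : ℝ) * ‖w' i -ᵥ g'‖ := by
        rw [hv']
        rw [dist_eq_norm_vsub V.direction, vadd_vsub]
        have hns := norm_smul (ε : ℝ) (w' i -ᵥ g')
        rw [hns, Real.norm_eq_abs, abs_of_pos hε0]
      have h2 : dist (v' i) c' ≤ (ε : ℝ) * ‖w' i -ᵥ g'‖ + dist r' c' := by
        rw [← h1]; exact dist_triangle _ _ _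
      have h3 : (ε : ℝ) * ‖w' i -ᵥ g'‖ ≤ (ε : ℝ) * M :=
        mul_le_mul_of_nonneg_left hnormle hε0.le
      have h4 : dist r' c' < δ := by
        rw [Subtype.dist_eq, dist_comm]
        exact hrc
      nlinarith
    exact hball hball'
  -- rationality
  have hvrat : ∀ i j, ∃ q : ℚ, v i j = (q : ℝ) := by
    intro i j
    choose R hR using hrrat
    refine ⟨ε * (W i j - (n : ℚ)⁻¹ * ∑ k, W k j) + R j, ?_⟩
    have hgj : g j = (n : ℝ)⁻¹ * ∑ k, w k j := by
      rw [hgw]; simp [Finset.sum_apply]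
    rw [hvval i]
    simp only [Pi.add_apply, Pi.smul_apply, Pi.sub_apply, smul_eq_mul, hgj, hW, hR]
    push_cast
    ring
  -- affine independence
  have hεne : (ε : ℝ) ≠ 0 := ne_of_gt hε0
  have hv'ind : AffineIndependent ℝ v' := by
    let T : V →ᵃ[ℝ] V := AffineMap.mk' (fun x => ((ε : ℝ) • (x -ᵥ g')) +ᵥ r')
      ((ε : ℝ) • LinearMap.id) g' (fun x => by simp)
    have hTinj : Function.Injective T := by
      intro x y h
      simp only [T, AffineMap.coe_mk'] at h
      have h2 := vadd_right_cancel r' h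
      have h3 := smul_right_injective V.direction hεne h2
      exact vsub_left_cancel h3
    exact B.ind.map' T hTinj
  have hvind : AffineIndependent ℝ v := hv'ind.map' V.subtype Subtype.val_injective
  -- barycentric weights
  set y' : V := ((ε : ℝ)⁻¹ • d) +ᵥ g' with hy'
  set a : Fin n → ℝ := fun i => B.coord i y' with ha
  have hasum : ∑ i, a i = 1 := B.sum_coord_apply_eq_one y'
  have hyval : (y' : Fin m → ℝ) = (ε : ℝ)⁻¹ • (c - r) + g := by
    have h := AffineSubspace.coe_vadd V ((ε : ℝ)⁻¹ • d) g'
    have h2 : ((((ε : ℝ)⁻¹ • d : V.direction)) : Fin m → ℝ) = (ε : ℝ)⁻¹ • (c - r) := by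
      have h3 := AffineSubspace.coe_vsub V c' r'
      push_cast
      rw [hd, h3, vsub_eq_sub]
    rw [hy']
    show ((((ε : ℝ)⁻¹ • d) +ᵥ g' : V) : Fin m → ℝ) = _
    rw [h, h2, vadd_eq_add]
  have hay : ∑ i, a i • w i = (ε : ℝ)⁻¹ • (c - r) + g := by
    rw [← hyval]; exact (hexp y').symm
  have hac : ∑ i, a i • v i = c := by
    have hterm : ∀ i, a i • v i = (ε : ℝ) • (a i • w i) + a i • (r - (ε : ℝ) • g) := by
      intro i; rw [hvval i]; module
    rw [Finset.sum_congr rfl fun i _ => hterm i, Finset.sum_add_distrib, ← Finset.smul_sum,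
      ← Finset.sum_smul, hasum, hay, one_smul, smul_add, smul_smul,
      mul_inv_cancel₀ hεne, one_smul]
    abel
  -- positivity of the weights
  have hapos : ∀ i, 0 < a i := by
    intro i
    have hcg : B.coord i g' = (n : ℝ)⁻¹ := by
      have h := AffineBasis.coord_apply_centroid (b := B)
        (s := (Finset.univ : Finset (Fin n))) (Finset.mem_univ i)
      show B.coord i (Finset.univ.centroid ℝ ⇑B) = (n : ℝ)⁻¹
      rw [h]
      simp [Finset.card_univ]
    have hai : a i = (ε : ℝ)⁻¹ * ((B.coord i).linear d) + (n : ℝ)⁻¹ := by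
      rw [ha]
      show B.coord i (((ε : ℝ)⁻¹ • d) +ᵥ g') = _
      rw [AffineMap.map_vadd, map_smul, hcg]
      simp [vadd_eq_add, smul_eq_mul]
    have habs : |(B.coord i).linear d| ≤ K * δ := by
      calc |(B.coord i).linear d| ≤ K * ‖d‖ := hKb i d
        _ ≤ K * δ := mul_le_mul_of_nonneg_left hdnorm.le hKnn
    rw [hai]
    -- arithmetic
    set L : ℝ := (B.coord i).linear d with hLd
    have h1 : δ ≤ (ε : ℝ) / (n * (K + 1)) := min_le_right _ _
    have h2 : |L| ≤ K * ((ε : ℝ) / (n * (K + 1))) :=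
      le_trans habs (by nlinarith)
    have h3 : (ε : ℝ)⁻¹ * |L| ≤ K / (n * (K + 1)) := by
      rw [div_eq_mul_inv] at h2 ⊢
      calc (ε : ℝ)⁻¹ * |L| ≤ (ε : ℝ)⁻¹ * (K * ((ε : ℝ) * ((n : ℝ) * (K + 1))⁻¹)) :=
            mul_le_mul_of_nonneg_left h2 (by positivity)
        _ = K * ((n : ℝ) * (K + 1))⁻¹ := by field_simp
    have h4 : K / ((n : ℝ) * (K + 1)) < (n : ℝ)⁻¹ := by
      rw [div_lt_iff₀ (by positivity)]
      rw [inv_mul_eq_div, lt_div_iff₀ hnR]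
      nlinarith
    have h5 : (ε : ℝ)⁻¹ * L ≥ -((ε : ℝ)⁻¹ * |L|) := by
      have := neg_abs_le L
      nlinarith [inv_pos.mpr hε0]
    linarith
  -- conclusion
  refine ⟨v, hvmem, hvrat, hvind, ?_, ⟨a, ⟨hapos, hasum, hac⟩, ?_⟩⟩
  · -- interior membership
    set E := V.direction
    set u : Fin n → E := fun i => v' i -ᵥ c' with hu
    have huind : AffineIndependent ℝ u := by
      have h1 : u = ⇑(AffineEquiv.vaddConst ℝ c').symm ∘ v' := by funext i; simp [hu]
      rw [h1]
      exact hv'ind.map' (AffineEquiv.vaddConst ℝ c').symm.toAffineMap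
        (AffineEquiv.vaddConst ℝ c').symm.injective
    have hutot : affineSpan ℝ (Set.range u) = ⊤ :=
      huind.affineSpan_eq_top_iff_card_eq_finrank_add_one.mpr (by simp [hn])
    let Bv : AffineBasis (Fin n) ℝ E := ⟨u, huind, hutot⟩
    have h0 : Finset.univ.affineCombination ℝ u a = 0 := by
      rw [Finset.affineCombination_eq_linear_combination _ _ _ hasum]
      apply Subtype.val_injective
      push_cast
      simp only [hu, AffineSubspace.coe_vsub, vsub_eq_sub, smul_sub, Finset.sum_sub_distrib,
        ← Finset.sum_smul, hasum, one_smul]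
      rw [show ∑ i, a i • ((v' i : V) : Fin m → ℝ) = c from hac]
      simp [hc']
    have hcoord0 : ∀ i, Bv.coord i 0 = a i := by
      intro i
      rw [← h0]
      exact Bv.coord_apply_combination_of_mem (Finset.mem_univ i) hasum
    have h0int : (0 : E) ∈ interior (convexHull ℝ (Set.range ⇑Bv)) := by
      rw [Bv.interior_convexHull]
      intro i
      rw [hcoord0]
      exact hapos i
    set T : Set (Fin m → ℝ) := convexHull ℝ (Set.range v) with hT
    set L : E →ᵃ[ℝ] (Fin m → ℝ) := AffineMap.mk'
      (fun e => (e : Fin m → ℝ) + (c' : Fin m → ℝ)) (E.subtype) 0 (fun e => by simp) with hL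
    set A : Set E := L ⁻¹' T with hA
    have hAconv : Convex ℝ A := (convex_convexHull ℝ _).affine_preimage L
    have hhull : convexHull ℝ (Set.range u) ⊆ A := by
      apply convexHull_min _ hAconv
      rintro _ ⟨i, rfl⟩
      show L (u i) ∈ T
      have : L (u i) = v i := by
        simp only [hL, AffineMap.coe_mk', hu, AffineSubspace.coe_vsub, vsub_eq_sub]
        simp only [hv]
        module
      rw [this]
      exact subset_convexHull ℝ _ ⟨i, rfl⟩
    have h0A : (0 : E) ∈ interior A :=
      interior_mono hhull (by rwa [show Set.range ⇑Bv = Set.range u from rfl] at h0int)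
    set φ : E ≃ₜ V := (AffineIsometryEquiv.vaddConst ℝ c').toHomeomorph with hφ
    have hAS : A = φ ⁻¹' ((Subtype.val : V → (Fin m → ℝ)) ⁻¹' T) := by
      ext e
      show L e ∈ T ↔ ((e +ᵥ c' : V) : Fin m → ℝ) ∈ T
      have hcoe : ((e +ᵥ c' : V) : Fin m → ℝ) = (e : Fin m → ℝ) + (c' : Fin m → ℝ) := by
        have h := AffineSubspace.coe_vadd V e c'
        rw [vadd_eq_add] at h
        exact h
      rw [hcoe]
      rfl
    rw [hAS, ← φ.preimage_interior] at h0A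
    have hφ0 : φ 0 = c' := by simp [hφ]
    show c' ∈ _
    rw [← hφ0]
    exact h0A
  · -- uniqueness
    rintro a' ⟨_, ha'sum, ha'c⟩
    have h1 : Finset.univ.affineCombination ℝ v a' = Finset.univ.affineCombination ℝ v a := by
      rw [Finset.affineCombination_eq_linear_combination _ _ _ ha'sum,
        Finset.affineCombination_eq_linear_combination _ _ _ hasum, ha'c, hac]
    exact (affineIndependent_iff_eq_of_fintype_affineCombination_eq ℝ v).mp hvind a' a
      ha'sum hasum h1
end

section
/- Fix positive real numbers a_1, …, a_n and a natural number N, and let S = { Σ_{i=1}^n a_i γ_i : γ_i ∈ ℤ, γ_i ≥ −N } ∩ (0, ∞). If S is nonempty then S has a minimum; in particular inf S > 0. -/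
/-- For fixed positive reals `a₁, …, a_n` and `N : ℕ`, the set
`S = { Σ aᵢ γᵢ : γᵢ ∈ ℤ, γᵢ ≥ -N } ∩ (0, ∞)`, if nonempty, has a minimum; in particular
`inf S > 0`. -/
theorem stmt_8 (n : ℕ) (a : Fin n → ℝ) (ha : ∀ i, 0 < a i) (N : ℕ)
    (S : Set ℝ)
    (hS : S = {x : ℝ | ∃ γ : Fin n → ℤ, (∀ i, -(N : ℤ) ≤ γ i) ∧
      x = ∑ i, a i * (γ i : ℝ)} ∩ Set.Ioi (0 : ℝ))
    (hne : S.Nonempty) :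
    (∃ x ∈ S, ∀ y ∈ S, x ≤ y) ∧ 0 < sInf S := by
  obtain ⟨x₀, hx₀⟩ := hne
  set C : ℝ := x₀ + N * ∑ j, a j with hC
  set box : Set (Fin n → ℤ) := Set.pi Set.univ (fun i => Set.Icc (-(N : ℤ)) ⌈C / a i⌉)
    with hbox
  have hboxfin : box.Finite := Set.Finite.pi (fun i => Set.finite_Icc _ _)
  have hTsub : S ∩ Set.Iic x₀ ⊆ (fun γ : Fin n → ℤ => ∑ i, a i * (γ i : ℝ)) '' box := by
    rintro x ⟨hxS, hxle⟩
    rw [hS] at hxS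
    obtain ⟨⟨γ, hγ, hxeq⟩, hxpos⟩ := hxS
    refine ⟨γ, ?_, hxeq.symm⟩
    intro i _
    refine ⟨hγ i, ?_⟩
    have hnn : ∀ j ∈ Finset.univ, 0 ≤ a j * ((γ j : ℝ) + N) := by
      intro j _
      apply mul_nonneg (ha j).le
      have := hγ j
      have : -(N : ℝ) ≤ (γ j : ℝ) := by exact_mod_cast this
      linarith
    have h2 := Finset.single_le_sum hnn (Finset.mem_univ i)
    have h3 : ∑ j, a j * ((γ j : ℝ) + N) = (∑ j, a j * (γ j : ℝ)) + N * ∑ j, a j := by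
      rw [Finset.mul_sum, ← Finset.sum_add_distrib]
      exact Finset.sum_congr rfl (fun j _ => by ring)
    have key : a i * ((γ i : ℝ) + N) ≤ C := by
      rw [h3, ← hxeq] at h2
      have hxle' : x ≤ x₀ := hxle
      have : x + N * ∑ j, a j ≤ C := by
        simp only [hC]; linarith
      linarith
    have hγle : (γ i : ℝ) ≤ C / a i := by
      rw [le_div_iff₀ (ha i)]
      have hN : 0 ≤ a i * (N : ℝ) := mul_nonneg (ha i).le (Nat.cast_nonneg N)
      nlinarith [key]
    have : (γ i : ℝ) ≤ (⌈C / a i⌉ : ℝ) := hγle.trans (Int.le_ceil _)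
    exact_mod_cast this
  have hTfin : (S ∩ Set.Iic x₀).Finite := (hboxfin.image _).subset hTsub
  have hTne : (S ∩ Set.Iic x₀).Nonempty := ⟨x₀, hx₀, le_refl x₀⟩
  obtain ⟨m, hmT, hmin⟩ := Set.exists_min_image (S ∩ Set.Iic x₀) id hTfin hTne
  have hmle : ∀ y ∈ S, m ≤ y := by
    intro y hy
    by_cases h : y ≤ x₀
    · exact hmin y ⟨hy, h⟩
    · exact le_trans (hmT.2) (le_of_not_ge h)
  have hmpos : 0 < m := by
    have := hmT.1
    rw [hS] at this
    exact this.2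
  refine ⟨⟨m, hmT.1, hmle⟩, ?_⟩
  have : m ≤ sInf S := le_csInf ⟨x₀, hx₀⟩ hmle
  linarith
end

section
/- Let M > 0 and let I ⊆ [−M, 0) and I' ⊆ [0, ∞) be sets of real numbers each satisfying the descending chain condition (no infinite strictly decreasing sequence). Define T = { −α/(β − α) : α ∈ I, β ∈ I' }. Then T ⊆ (0, 1] and T satisfies the ascending chain condition, i.e. T contains no infinite strictly increasing sequence. -/
/-- If `I ⊆ [-M, 0)` and `I' ⊆ [0, ∞)` both satisfy DCC, then
`T = { -α/(β-α) : α ∈ I, β ∈ I' }` is contained in `(0, 1]` and satisfies ACC. -/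
theorem stmt_10 (M : ℝ) (hM : 0 < M) (I I' : Set ℝ)
    (hI : I ⊆ Set.Ico (-M) 0) (hI' : I' ⊆ Set.Ici (0 : ℝ))
    (hIdcc : ¬∃ f : ℕ → ℝ, (∀ k, f k ∈ I) ∧ StrictAnti f)
    (hI'dcc : ¬∃ f : ℕ → ℝ, (∀ k, f k ∈ I') ∧ StrictAnti f)
    (T : Set ℝ)
    (hT : T = {t : ℝ | ∃ α ∈ I, ∃ β ∈ I', t = -α / (β - α)}) :
    T ⊆ Set.Ioc (0 : ℝ) 1 ∧ ¬∃ f : ℕ → ℝ, (∀ k, f k ∈ T) ∧ StrictMono f := by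
  subst hT
  have key : ∀ {α β : ℝ}, α ∈ I → β ∈ I' → -α / (β - α) ∈ Set.Ioc (0 : ℝ) 1 := by
    intro α β hα hβ
    have h1 : α < 0 := (hI hα).2
    have h2 : (0 : ℝ) ≤ β := hI' hβ
    have hβα : 0 < β - α := by linarith
    constructor
    · exact div_pos (by linarith) hβα
    · rw [div_le_one hβα]; linarith
  constructor
  · rintro t ⟨α, hα, β, hβ, rfl⟩
    exact key hα hβ
  · rintro ⟨f, hfT, hf⟩
    -- extract α, β sequences
    choose a ha b hb hfe using hfT
    -- I is well-founded, hence PWO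
    have hIwf : I.IsWF := by
      rw [Set.isWF_iff_no_descending_seq]
      intro g hg hgs
      exact hIdcc ⟨g, fun k => hgs k, hg⟩
    obtain ⟨g, hg⟩ := hIwf.isPWO.exists_monotone_subseq ha
    -- along subsequence g, b is strictly decreasing in I'
    refine hI'dcc ⟨fun k => b (g k), fun k => hb _, ?_⟩
    have hrat : ∀ k l : ℕ, k < l → b (g l) / (-(a (g l))) < b (g k) / (-(a (g k))) := by
      intro k l hkl
      have hfkl : f (g k) < f (g l) := hf (g.strictMono hkl)
      have hk := key (ha (g k)) (hb (g k))
      have hl := key (ha (g l)) (hb (g l))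
      simp only [hfe] at hfkl
      have hak : a (g k) < 0 := (hI (ha (g k))).2
      have hal : a (g l) < 0 := (hI (ha (g l))).2
      have hbk : (0:ℝ) ≤ b (g k) := hI' (hb (g k))
      have hbl : (0:ℝ) ≤ b (g l) := hI' (hb (g l))
      have hdk : (0:ℝ) < b (g k) - a (g k) := by linarith
      have hdl : (0:ℝ) < b (g l) - a (g l) := by linarith
      rw [div_lt_div_iff₀ hdk hdl] at hfkl
      rw [div_lt_div_iff₀ (by linarith : (0:ℝ) < -(a (g l))) (by linarith : (0:ℝ) < -(a (g k)))]
      nlinarith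
    -- conclude strict antitone of b ∘ g
    have hstep : ∀ k l : ℕ, k < l → b (g l) < b (g k) := by
      intro k l hkl
      have hmono : a (g k) ≤ a (g l) := hg hkl.le
      have hak : a (g k) < 0 := (hI (ha (g k))).2
      have hal : a (g l) < 0 := (hI (ha (g l))).2
      have hbl : (0:ℝ) ≤ b (g l) := hI' (hb (g l))
      have h := hrat k l hkl
      rw [div_lt_div_iff₀ (by linarith : (0:ℝ) < -(a (g l))) (by linarith : (0:ℝ) < -(a (g k)))] at h
      nlinarith
    exact strictAnti_nat_of_succ_lt fun n => hstep n (n+1) (Nat.lt_succ_self n)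
end

section
/- Let S ⊆ ℝ be a set satisfying the descending chain condition (no infinite strictly decreasing sequence). Then every sequence (x_n) of elements of S has a nondecreasing subsequence. Consequently, if I ⊆ ℝ satisfies DCC and J ⊆ (0, ∞) satisfies ACC and is bounded above, then the set of quotients { β/α : β ∈ I, β ≥ 0, α ∈ J } contains no infinite strictly decreasing sequence of the form β_n/α_n with β_n ∈ I, α_n ∈ J. -/
lemma dcc_subseq (S : Set ℝ)
    (hS : ¬∃ f : ℕ → ℝ, (∀ k, f k ∈ S) ∧ StrictAnti f) :
    ∀ x : ℕ → ℝ, (∀ k, x k ∈ S) → ∃ φ : ℕ → ℕ, StrictMono φ ∧ Monotone (x ∘ φ) := by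
  intro x hx
  have hwf : S.IsWF := by
    rw [Set.isWF_iff_no_descending_seq]
    intro f hf hmem
    exact hS ⟨f, fun k => hmem k, hf⟩
  obtain ⟨g, hg⟩ := hwf.isPWO.exists_monotone_subseq hx
  exact ⟨g, g.strictMono, hg⟩

/-- A DCC set of reals admits nondecreasing subsequences of any sequence;
consequently quotients `β/α` with `β` from a DCC set (with `β ≥ 0`) and `α` from a bounded
ACC subset of `(0, ∞)` admit no strictly decreasing sequence. -/
theorem stmt_15 (S : Set ℝ)
    (hS : ¬∃ f : ℕ → ℝ, (∀ k, f k ∈ S) ∧ StrictAnti f) :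
    (∀ x : ℕ → ℝ, (∀ k, x k ∈ S) → ∃ φ : ℕ → ℕ, StrictMono φ ∧ Monotone (x ∘ φ)) ∧
    (∀ I J : Set ℝ, (¬∃ f : ℕ → ℝ, (∀ k, f k ∈ I) ∧ StrictAnti f) →
      J ⊆ Set.Ioi (0 : ℝ) → (¬∃ f : ℕ → ℝ, (∀ k, f k ∈ J) ∧ StrictMono f) →
      BddAbove J →
      ¬∃ (βs αs : ℕ → ℝ), (∀ k, βs k ∈ I) ∧ (∀ k, 0 ≤ βs k) ∧ (∀ k, αs k ∈ J) ∧
        StrictAnti (fun k => βs k / αs k)) := by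
  refine ⟨dcc_subseq S hS, ?_⟩
  rintro I J hI hJpos hJ _ ⟨βs, αs, hβI, hβ0, hαJ, hdec⟩
  -- -J satisfies DCC
  have hnegJ : ¬∃ f : ℕ → ℝ, (∀ k, f k ∈ Neg.neg '' J) ∧ StrictAnti f := by
    rintro ⟨f, hf, hanti⟩
    refine hJ ⟨fun k => -f k, fun k => ?_, fun m n hmn => by
      simpa using hanti hmn⟩
    obtain ⟨y, hy, hy'⟩ := hf k
    simpa [← hy'] using hy
  obtain ⟨φ₁, hφ₁, hα₁⟩ := dcc_subseq _ hnegJ (fun k => -αs k)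
      (fun k => ⟨αs k, hαJ k, rfl⟩)
  obtain ⟨φ₂, hφ₂, hβ₂⟩ := dcc_subseq I hI (fun k => βs (φ₁ k))
      (fun k => hβI _)
  set ψ := φ₁ ∘ φ₂ with hψ
  have hψm : StrictMono ψ := hφ₁.comp hφ₂
  have h01 : βs (ψ 0) / αs (ψ 0) > βs (ψ 1) / αs (ψ 1) := hdec (hψm (by norm_num))
  have hβle : βs (ψ 0) ≤ βs (ψ 1) := hβ₂ (by norm_num : (0:ℕ) ≤ 1)
  have hαle : αs (ψ 1) ≤ αs (ψ 0) := by
    have := hα₁ (hφ₂.monotone (by norm_num : (0:ℕ) ≤ 1))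
    simpa [hψ] using this
  have hα1pos : 0 < αs (ψ 1) := hJpos (hαJ _)
  have : βs (ψ 0) / αs (ψ 0) ≤ βs (ψ 1) / αs (ψ 1) :=
    div_le_div₀ (le_trans (hβ0 _) hβle) hβle hα1pos hαle
  linarith
end
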